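/- For 1 ≤ p < ∞ and s > 0, the maps h_p^(s) and h_p^(1/s) on ℓ^p are mutually inverse: h_p^(s) ∘ h_p^(1/s) = id and h_p^(1/s) ∘ h_p^(s) = id. -/

import Mathlib

/-!
Write `T n = ∑_{k ≥ n} |x_k|^p`. The coordinate `(h^(t) x)_n` has the phase of `x_n` and
`p`-th power of modulus `T n ^ t - T (n + 1) ^ t`; these telescope, so the tails of `h^(t) x`
are `T n ^ t`. Applying `h^(1/t)` therefore keeps the phase of `x_n` and restores the modulus
`(T n - T (n + 1)) ^ (1/p) = |x_n|`.
-/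

open scoped ENNReal
open Filter Topology

noncomputable def lpTail (p : ℝ≥0∞) (x : ℕ → ℂ) (n : ℕ) : ℝ :=
  ∑' k : ℕ, ‖x (n + k)‖ ^ p.toReal

noncomputable def hMap (p : ℝ≥0∞) (s : ℝ) (x : ℕ → ℂ) (n : ℕ) : ℂ :=
  if x n = 0 then 0
  else (x n / ‖x n‖) *
    ((((lpTail p x n) ^ s - (lpTail p x (n + 1)) ^ s) ^ (1 / p.toReal) : ℝ) : ℂ)

lemma hasSum_sub_succ_of_antitone {f : ℕ → ℝ} (hf : Antitone f) (hf0 : Tendsto f atTop (𝓝 0)) :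
    HasSum (fun k => f k - f (k + 1)) (f 0) := by
  rw [hasSum_iff_tendsto_nat_of_nonneg fun k => sub_nonneg.2 (hf k.le_succ)]
  simp only [Finset.sum_range_sub']
  simpa using tendsto_const_nhds.sub hf0

lemma div_norm_mul_ofReal_div_norm (z : ℂ) {c : ℝ} (hc : 0 < c) :
    z / ‖z‖ * c / ‖z / ‖z‖ * c‖ = z / ‖z‖ := by
  rcases eq_or_ne z 0 with rfl | hz
  · simp
  have hnorm : ‖z / ‖z‖ * c‖ = c := by
    rw [norm_mul, norm_div, Complex.norm_real, norm_norm, div_self (norm_ne_zero_iff.2 hz),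
      Complex.norm_real, Real.norm_of_nonneg hc.le, one_mul]
  rw [hnorm, mul_div_assoc, div_self (Complex.ofReal_ne_zero.2 hc.ne'), mul_one]

section lpTail

variable {p : ℝ≥0∞} {x : ℕ → ℂ}

lemma lpTail_nonneg (n : ℕ) : 0 ≤ lpTail p x n :=
  tsum_nonneg fun _ => Real.rpow_nonneg (norm_nonneg _) _

lemma lpTail_eq_add (hx : Summable fun k => ‖x k‖ ^ p.toReal) (n : ℕ) :
    lpTail p x n = ‖x n‖ ^ p.toReal + lpTail p x (n + 1) := by
  have hxn : Summable fun k => ‖x (n + k)‖ ^ p.toReal := by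
    simpa only [add_comm n] using (summable_nat_add_iff n).2 hx
  simp only [lpTail, hxn.tsum_eq_zero_add, add_zero, add_assoc, add_comm 1]

lemma lpTail_antitone (hx : Summable fun k => ‖x k‖ ^ p.toReal) : Antitone (lpTail p x) :=
  antitone_nat_of_succ_le fun n =>
    (lpTail_eq_add hx n).symm ▸ le_add_of_nonneg_left (Real.rpow_nonneg (norm_nonneg _) _)

lemma tendsto_lpTail_zero : Tendsto (lpTail p x) atTop (𝓝 0) :=
  (tendsto_sum_nat_add fun k => ‖x k‖ ^ p.toReal).congr fun n =>
    tsum_congr fun k => by rw [add_comm]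

end lpTail

section hMap

variable {p : ℝ≥0∞} {x : ℕ → ℂ} {t : ℝ}

-- The case split in `hMap` is superfluous, since `0 / ‖0‖ = 0`.
lemma hMap_apply (p : ℝ≥0∞) (s : ℝ) (x : ℕ → ℂ) (n : ℕ) : hMap p s x n =
    x n / ‖x n‖ * (((lpTail p x n ^ s - lpTail p x (n + 1) ^ s) ^ (1 / p.toReal) : ℝ) : ℂ) := by
  by_cases h : x n = 0 <;> simp [hMap, h]

lemma lpTail_rpow_sub_nonneg (hx : Summable fun k => ‖x k‖ ^ p.toReal) (ht : 0 ≤ t) (n : ℕ) :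
    0 ≤ lpTail p x n ^ t - lpTail p x (n + 1) ^ t :=
  sub_nonneg.2 <| Real.rpow_le_rpow (lpTail_nonneg _) (lpTail_antitone hx n.le_succ) ht

lemma norm_hMap_rpow (hp : 0 < p.toReal) (hx : Summable fun k => ‖x k‖ ^ p.toReal) (ht : 0 ≤ t)
    (n : ℕ) : ‖hMap p t x n‖ ^ p.toReal = lpTail p x n ^ t - lpTail p x (n + 1) ^ t := by
  by_cases h : x n = 0
  · have hT : lpTail p x n = lpTail p x (n + 1) := by
      rw [lpTail_eq_add hx n, h, norm_zero, Real.zero_rpow hp.ne', zero_add]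
    simp [hMap, h, hT, Real.zero_rpow hp.ne']
  · have hD := lpTail_rpow_sub_nonneg hx ht n
    rw [hMap_apply, norm_mul, norm_div, Complex.norm_real, norm_norm,
      div_self (norm_ne_zero_iff.2 h), one_mul, Complex.norm_real,
      Real.norm_of_nonneg (Real.rpow_nonneg hD _), one_div, Real.rpow_inv_rpow hD hp.ne']

lemma lpTail_hMap (hp : 0 < p.toReal) (hx : Summable fun k => ‖x k‖ ^ p.toReal) (ht : 0 < t)
    (n : ℕ) : lpTail p (hMap p t x) n = lpTail p x n ^ t := by
  have hanti : Antitone fun k => lpTail p x (n + k) ^ t := fun i j hij =>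
    Real.rpow_le_rpow (lpTail_nonneg _) (lpTail_antitone hx (by omega)) ht.le
  have hlim : Tendsto (fun k => lpTail p x (n + k) ^ t) atTop (𝓝 0) := by
    have h := (Real.continuousAt_rpow_const 0 t (.inr ht.le)).tendsto.comp
      ((tendsto_add_atTop_iff_nat n).2 (tendsto_lpTail_zero (p := p) (x := x)))
    rw [Real.zero_rpow ht.ne'] at h
    exact h.congr fun k => by rw [Function.comp_apply, add_comm]
  calc lpTail p (hMap p t x) n
      = ∑' k, (lpTail p x (n + k) ^ t - lpTail p x (n + k + 1) ^ t) :=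
        tsum_congr fun k => norm_hMap_rpow hp hx ht.le (n + k)
    _ = lpTail p x n ^ t := (hasSum_sub_succ_of_antitone hanti hlim).tsum_eq

lemma hMap_one_div_hMap (hp : 0 < p.toReal) (hx : Summable fun k => ‖x k‖ ^ p.toReal)
    (ht : 0 < t) : hMap p (1 / t) (hMap p t x) = x := by
  funext n
  by_cases h : x n = 0
  · simp [hMap, h]
  have hc : 0 < (lpTail p x n ^ t - lpTail p x (n + 1) ^ t) ^ (1 / p.toReal) := by
    refine Real.rpow_pos_of_pos (sub_pos.2 (Real.rpow_lt_rpow (lpTail_nonneg _) ?_ ht)) _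
    rw [lpTail_eq_add hx n, lt_add_iff_pos_left]
    exact Real.rpow_pos_of_pos (norm_pos_iff.2 h) _
  have hphase : hMap p t x n / ‖hMap p t x n‖ = x n / ‖x n‖ := by
    rw [hMap_apply, div_norm_mul_ofReal_div_norm _ hc]
  have hmod : ((lpTail p x n ^ t) ^ (1 / t) - (lpTail p x (n + 1) ^ t) ^ (1 / t)) ^ (1 / p.toReal)
      = ‖x n‖ := by
    simp only [one_div, Real.rpow_rpow_inv (lpTail_nonneg _) ht.ne']
    rw [lpTail_eq_add hx n, add_sub_cancel_right, Real.rpow_rpow_inv (norm_nonneg _) hp.ne']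
  rw [hMap_apply, lpTail_hMap hp hx ht, lpTail_hMap hp hx ht, hphase, hmod]
  exact div_mul_cancel₀ _ (Complex.ofReal_ne_zero.2 (norm_ne_zero_iff.2 h))

end hMap

/-- `h_p^(s)` and `h_p^(1/s)` are mutually inverse on `ℓ^p`. -/
theorem hMap_inverse (p : ℝ≥0∞) [Fact (1 ≤ p)] (hp : p ≠ ∞) (s : ℝ) (hs : 0 < s) :
    (∀ x : lp (fun _ : ℕ => ℂ) p, hMap p s (hMap p (1 / s) x) = (x : ℕ → ℂ)) ∧
    (∀ x : lp (fun _ : ℕ => ℂ) p, hMap p (1 / s) (hMap p s x) = (x : ℕ → ℂ)) := by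
  have hp0 : 0 < p.toReal := ENNReal.toReal_pos (zero_lt_one.trans_le Fact.out).ne' hp
  have hsum (x : lp (fun _ : ℕ => ℂ) p) : Summable fun k => ‖(x : ℕ → ℂ) k‖ ^ p.toReal :=
    (lp.memℓp x).summable hp0
  refine ⟨fun x => ?_, fun x => hMap_one_div_hMap hp0 (hsum x) hs⟩
  simpa only [one_div_one_div] using hMap_one_div_hMap hp0 (hsum x) (one_div_pos.2 hs)
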